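/- arXiv:2108.01485 — 2 statements merged into one kernel-verified Lean document; each statement's English description precedes it below -/
import Mathlib

section
/- In the setting of the feature-selection process (choose S₀ uniformly among n_target-subsets of S' = {1,…,n_useful}, then s uniform on S₀ with probability p and uniform on S∖S₀ with probability 1−p), if p > n_target/n_feature then for every feature i ∈ S' the probability that s = i is strictly greater than 1/n_feature; if p < n_target/n_feature, it is strictly less than 1/n_feature. -/
/-!
A fixed `i ∈ s` lies in exactly a `k / #s` fraction of the `k`-subsets of `s`
(`#{t | i ∈ t} · #s = k · #(powersetCard k s)`, i.e. `(n+1)·C(n,j) = C(n+1,j+1)·(j+1)`).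
This gives the closed form `p / nUseful + (1 - p)(1 - nTarget / nUseful) / (nFeature - nTarget)`,
and subtracting `1 / nFeature` leaves the positive factor
`(nFeature - nUseful) / (nUseful (nFeature - nTarget))` times `p - nTarget / nFeature`.
-/

open Finset

noncomputable def selectProb (nFeature nUseful nTarget : ℕ) (p : ℝ) (i : ℕ) : ℝ :=
  (((Finset.Icc 1 nUseful).powersetCard nTarget).card : ℝ)⁻¹ *
    ∑ S₀ ∈ (Finset.Icc 1 nUseful).powersetCard nTarget,
      (p * (if i ∈ S₀ then ((nTarget : ℝ))⁻¹ else 0) +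
       (1 - p) * (if i ∈ S₀ then 0 else ((nFeature : ℝ) - (nTarget : ℝ))⁻¹))

section PowersetCard

variable {α : Type*} [DecidableEq α] {s : Finset α} {i : α}

theorem card_filter_mem_powersetCard_mul_card (hi : i ∈ s) (k : ℕ) :
    #{t ∈ s.powersetCard k | i ∈ t} * #s = k * #(s.powersetCard k) := by
  rcases k with _ | k
  · simp
  obtain ⟨m, hm⟩ : ∃ m, #s = m + 1 := Nat.exists_eq_add_one.2 (card_pos.2 ⟨i, hi⟩)
  have hfilter : #{t ∈ s.powersetCard (k + 1) | i ∈ t} = m.choose k := by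
    simpa [hm] using card_filter_powersetCard_subset {i} s (k + 1)
      (singleton_subset_iff.2 hi) (by simp)
  rw [hfilter, card_powersetCard, hm, mul_comm, Nat.add_one_mul_choose_eq, mul_comm]

theorem inv_card_mul_sum_ite_mem_powersetCard (hi : i ∈ s) {k : ℕ} (hk : k ≤ #s) (a b : ℝ) :
    (#(s.powersetCard k) : ℝ)⁻¹ * ∑ t ∈ s.powersetCard k, (if i ∈ t then a else b) =
      k / #s * a + (1 - k / #s) * b := by
  have hcount : (#{t ∈ s.powersetCard k | i ∈ t} : ℝ) * #s = k * #(s.powersetCard k) := by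
    exact_mod_cast card_filter_mem_powersetCard_mul_card hi k
  have hcompl : (#{t ∈ s.powersetCard k | i ∈ t} : ℝ) + #{t ∈ s.powersetCard k | i ∉ t} =
      #(s.powersetCard k) := by
    exact_mod_cast card_filter_add_card_filter_not (s := s.powersetCard k) (i ∈ ·)
  have hN : (#(s.powersetCard k) : ℝ) ≠ 0 := by
    rw [card_powersetCard]; exact_mod_cast (Nat.choose_pos hk).ne'
  have hs : (#s : ℝ) ≠ 0 := by exact_mod_cast (card_pos.2 ⟨i, hi⟩).ne'
  rw [sum_ite, sum_const, sum_const, nsmul_eq_mul, nsmul_eq_mul]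
  field_simp
  linear_combination (a - b) * hcount + #s * b * hcompl

end PowersetCard

theorem selectProb_eq (nFeature nUseful nTarget : ℕ) (p : ℝ) (ht : 0 < nTarget)
    (htu : nTarget ≤ nUseful) {i : ℕ} (hi : i ∈ Icc 1 nUseful) :
    selectProb nFeature nUseful nTarget p i =
      p / nUseful + (1 - p) * (1 - nTarget / nUseful) / (nFeature - nTarget) := by
  have hsummand : ∀ S₀ : Finset ℕ,
      p * (if i ∈ S₀ then ((nTarget : ℝ))⁻¹ else 0) +
        (1 - p) * (if i ∈ S₀ then 0 else ((nFeature : ℝ) - nTarget)⁻¹) =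
      if i ∈ S₀ then p / nTarget else (1 - p) / (nFeature - nTarget) := by
    intro S₀
    split_ifs <;> ring
  have hcard : #(Icc 1 nUseful) = nUseful := Nat.card_Icc 1 nUseful
  have ht' : (nTarget : ℝ) ≠ 0 := by exact_mod_cast ht.ne'
  rw [selectProb, sum_congr rfl fun S₀ _ => hsummand S₀,
    inv_card_mul_sum_ite_mem_powersetCard hi (hcard.symm ▸ htu), hcard]
  field_simp

theorem selectProb_sub_inv (nFeature nUseful nTarget : ℕ) (p : ℝ) (ht : 0 < nTarget)
    (htu : nTarget ≤ nUseful) (huf : nUseful < nFeature) {i : ℕ} (hi : i ∈ Icc 1 nUseful) :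
    selectProb nFeature nUseful nTarget p i - 1 / nFeature =
      (nFeature - nUseful) / (nUseful * (nFeature - nTarget)) * (p - nTarget / nFeature) := by
  have hFt : (nFeature : ℝ) - nTarget ≠ 0 :=
    sub_ne_zero.2 (by exact_mod_cast (htu.trans_lt huf).ne')
  have hF : (nFeature : ℝ) ≠ 0 := by exact_mod_cast (ht.trans_le htu |>.trans huf).ne'
  have hu : (nUseful : ℝ) ≠ 0 := by exact_mod_cast (ht.trans_le htu).ne'
  rw [selectProb_eq nFeature nUseful nTarget p ht htu hi]
  field_simp
  ring

theorem selectProb_vs_uniform_general (nFeature nUseful nTarget : ℕ) (p : ℝ)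
    (ht : 0 < nTarget) (htu : nTarget ≤ nUseful) (huf : nUseful < nFeature)
    (i : ℕ) (hi : i ∈ Finset.Icc 1 nUseful) :
    (p > (nTarget : ℝ) / nFeature →
      selectProb nFeature nUseful nTarget p i > 1 / nFeature) ∧
    (p < (nTarget : ℝ) / nFeature →
      selectProb nFeature nUseful nTarget p i < 1 / nFeature) := by
  have hsub := selectProb_sub_inv nFeature nUseful nTarget p ht htu huf hi
  have hfactor : 0 < ((nFeature : ℝ) - nUseful) / (nUseful * (nFeature - nTarget)) := by
    have hFu : (nUseful : ℝ) < nFeature := by exact_mod_cast huf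
    have hFt : (nTarget : ℝ) < nFeature := by exact_mod_cast htu.trans_lt huf
    have hu : (0 : ℝ) < nUseful := by exact_mod_cast ht.trans_le htu
    exact div_pos (sub_pos.2 hFu) (mul_pos hu (sub_pos.2 hFt))
  constructor
  · intro hp
    rw [gt_iff_lt, ← sub_pos, hsub]
    exact mul_pos hfactor (sub_pos.2 hp)
  · intro hp
    rw [← sub_neg, hsub]
    exact mul_neg_of_pos_of_neg hfactor (sub_neg.2 hp)

/-- Theorem 1 of the paper. -/
theorem selectProb_vs_uniform (nFeature nUseful nTarget : ℕ) (p : ℝ)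
    (ht : 0 < nTarget) (htu : nTarget ≤ nUseful) (huf : nUseful < nFeature)
    (hp0 : 0 ≤ p) (hp1 : p ≤ 1) (i : ℕ) (hi : i ∈ Finset.Icc 1 nUseful) :
    (p > (nTarget : ℝ) / nFeature →
      selectProb nFeature nUseful nTarget p i > 1 / nFeature) ∧
    (p < (nTarget : ℝ) / nFeature →
      selectProb nFeature nUseful nTarget p i < 1 / nFeature) :=
  selectProb_vs_uniform_general nFeature nUseful nTarget p ht htu huf i hi
end

section
/- Let h(p) = p/n_useful + (1−p)(n_useful − n_target)/(n_useful(n_feature − n_target)) − 1/n_feature, with positive integers n_target ≤ n_useful < n_feature. Then h is an affine function of p with positive slope, and h(p) > 0 ⟺ p > n_target/n_feature, h(p) = 0 ⟺ p = n_target/n_feature, h(p) < 0 ⟺ p < n_target/n_feature. -/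
/-! Writing `u, f, t` for `nUseful, nFeature, nTarget`, the function `h` collapses to
`(f - u) / (u (f - t)) * (p - t / f)`; the prefactor is positive since `t ≤ u < f`, so the sign
of `h p` is the sign of `p - t / f`. -/

section SelectionGain

variable {K : Type*}

theorem one_div_sub_div_mul_eq [Field K] {u f t : K} (hu : u ≠ 0) (hft : f - t ≠ 0) :
    1 / u - (u - t) / (u * (f - t)) = (f - u) / (u * (f - t)) := by
  field_simp
  ring

theorem selectionGain_eq_slope_mul [Field K] {u f t : K} (hu : u ≠ 0) (hf : f ≠ 0)
    (hft : f - t ≠ 0) (p : K) :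
    p / u + (1 - p) * (u - t) / (u * (f - t)) - 1 / f
      = (f - u) / (u * (f - t)) * (p - t / f) := by
  field_simp
  ring

theorem selectionSlope_pos [Field K] [LinearOrder K] [IsStrictOrderedRing K] {u f t : K}
    (hu : 0 < u) (htu : t ≤ u) (huf : u < f) :
    0 < (f - u) / (u * (f - t)) :=
  div_pos (sub_pos.2 huf) (mul_pos hu (by linarith))

theorem mul_sub_trichotomy_of_pos [Field K] [LinearOrder K] [IsStrictOrderedRing K] {c : K}
    (hc : 0 < c) (p q : K) :
    (c * (p - q) > 0 ↔ p > q) ∧ (c * (p - q) = 0 ↔ p = q) ∧ (c * (p - q) < 0 ↔ p < q) :=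
  ⟨by rw [gt_iff_lt, mul_pos_iff_of_pos_left hc, sub_pos],
    by rw [mul_eq_zero, sub_eq_zero, or_iff_right hc.ne'],
    (smul_neg_iff_of_pos_left hc).trans sub_neg⟩

end SelectionGain

/-- Full trichotomy of Theorem 1: `h(p)` is affine in `p` with positive slope
`(nFeature - nUseful)/(nUseful (nFeature - nTarget))`, and its sign matches the comparison
of `p` with `nTarget/nFeature`. -/
theorem selectProb_trichotomy (nFeature nUseful nTarget : ℕ)
    (ht : 0 < nTarget) (htu : nTarget ≤ nUseful) (huf : nUseful < nFeature) :
    (1 / (nUseful : ℝ) - ((nUseful : ℝ) - nTarget) / ((nUseful : ℝ) * ((nFeature : ℝ) - nTarget))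
        = ((nFeature : ℝ) - nUseful) / ((nUseful : ℝ) * ((nFeature : ℝ) - nTarget)) ∧
      0 < ((nFeature : ℝ) - nUseful) / ((nUseful : ℝ) * ((nFeature : ℝ) - nTarget))) ∧
    ∀ p : ℝ,
      (p / nUseful + (1 - p) * ((nUseful : ℝ) - nTarget) /
            ((nUseful : ℝ) * ((nFeature : ℝ) - nTarget)) - 1 / nFeature > 0
          ↔ p > (nTarget : ℝ) / nFeature) ∧
      (p / nUseful + (1 - p) * ((nUseful : ℝ) - nTarget) /
            ((nUseful : ℝ) * ((nFeature : ℝ) - nTarget)) - 1 / nFeature = 0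
          ↔ p = (nTarget : ℝ) / nFeature) ∧
      (p / nUseful + (1 - p) * ((nUseful : ℝ) - nTarget) /
            ((nUseful : ℝ) * ((nFeature : ℝ) - nTarget)) - 1 / nFeature < 0
          ↔ p < (nTarget : ℝ) / nFeature) := by
  have htu' : (nTarget : ℝ) ≤ nUseful := by exact_mod_cast htu
  have huf' : (nUseful : ℝ) < nFeature := by exact_mod_cast huf
  have hu : (0 : ℝ) < nUseful := by exact_mod_cast ht.trans_le htu
  have hft : (nFeature : ℝ) - nTarget ≠ 0 := by linarith
  have hslope := selectionSlope_pos hu htu' huf'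
  refine ⟨⟨one_div_sub_div_mul_eq hu.ne' hft, hslope⟩, fun p => ?_⟩
  rw [selectionGain_eq_slope_mul hu.ne' (hu.trans huf').ne' hft]
  exact mul_sub_trichotomy_of_pos hslope p _
end
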